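/- arXiv:2109.04169 — 3 statements merged into one kernel-verified Lean document; each statement's English description precedes it below -/
import Mathlib

section
/- Let γ ≥ 2 and define H = (1/(4(1+γ)))(2γ|0⟩⟨0|⊗σ₀ + |1⟩⟨1|⊗σ₀ + σ₁⊗σ₁) on ℂ²⊗ℂ², where σ₀=I and σ₁=|0⟩⟨1|+|1⟩⟨0|. With η₀=η₁=γ/(2(1+γ)), η₊=η₋=1/(2(1+γ)), ρ₀=|00⟩⟨00|, ρ₁=|01⟩⟨01|, ρ₊=|+⟩⟨+|⊗|+⟩⟨+|, ρ₋=|−⟩⟨−|⊗|−⟩⟨−|, each operator H − ηᵢρᵢ can be written as a sum of positive semidefinite operators and partial transposes of positive semidefinite operators; consequently Tr((H−ηᵢρᵢ)B) ≥ 0 for every separable positive semidefinite B. -/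
open Matrix ComplexOrder
open scoped Kronecker

noncomputable section

abbrev M2 : Type := Matrix (Fin 2) (Fin 2) ℂ
abbrev M4 : Type := Matrix (Fin 2 × Fin 2) (Fin 2 × Fin 2) ℂ

/-- standard basis kets of ℂ² -/
def ket0 : Fin 2 → ℂ := ![1, 0]
def ket1 : Fin 2 → ℂ := ![0, 1]
/-- |+⟩ = (|0⟩+|1⟩)/√2 -/
def ketP : Fin 2 → ℂ := ![(((Real.sqrt 2)⁻¹ : ℝ) : ℂ), (((Real.sqrt 2)⁻¹ : ℝ) : ℂ)]
/-- |−⟩ = (|0⟩−|1⟩)/√2 -/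
def ketM : Fin 2 → ℂ := ![(((Real.sqrt 2)⁻¹ : ℝ) : ℂ), -(((Real.sqrt 2)⁻¹ : ℝ) : ℂ)]

/-- outer product |v⟩⟨w| -/
def outer {n : Type*} (v w : n → ℂ) : Matrix n n ℂ := Matrix.of fun i j => v i * star (w j)
/-- projector |v⟩⟨v| -/
def proj {n : Type*} (v : n → ℂ) : Matrix n n ℂ := outer v v

/-- tensor product of two qubit vectors -/
def kron2 (v w : Fin 2 → ℂ) : Fin 2 × Fin 2 → ℂ := fun p => v p.1 * w p.2

/-- partial transpose on the second tensor factor, in the standard basis -/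
def PT (A : M4) : M4 := Matrix.of fun p q => A (p.1, q.2) (q.1, p.2)

/-- separability: a sum of tensor products of positive semidefinite operators -/
def Separable (E : M4) : Prop :=
  ∃ (k : ℕ) (X Y : Fin k → M2),
    (∀ i, (X i).PosSemidef ∧ (Y i).PosSemidef) ∧ E = ∑ i, (X i) ⊗ₖ (Y i)

def σ0 : M2 := 1
def σ1 : M2 := !![0, 1; 1, 0]
def σ2 : M2 := !![0, -Complex.I; Complex.I, 0]

/-- Example 1 states -/
def ρ00 : M4 := proj ket0 ⊗ₖ proj ket0
def ρ01 : M4 := proj ket0 ⊗ₖ proj ket1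
def ρPP : M4 := proj ketP ⊗ₖ proj ketP
def ρMM : M4 := proj ketM ⊗ₖ proj ketM
/-- prior probabilities η₀ = η₁ = γ/(2(1+γ)) -/
def η01 (γ : ℝ) : ℝ := γ / (2 * (1 + γ))
/-- prior probabilities η₊ = η₋ = 1/(2(1+γ)) -/
def ηPM (γ : ℝ) : ℝ := 1 / (2 * (1 + γ))

/-- H = (1/(4(1+γ)))(2γ|0⟩⟨0|⊗σ₀ + |1⟩⟨1|⊗σ₀ + σ₁⊗σ₁) -/
def Hop (γ : ℝ) : M4 :=
  (((4 * (1 + γ))⁻¹ : ℝ) : ℂ) •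
    ((2 * (γ : ℂ)) • (proj ket0 ⊗ₖ σ0) + proj ket1 ⊗ₖ σ0 + σ1 ⊗ₖ σ1)

def ηvec (γ : ℝ) : Fin 4 → ℝ := ![η01 γ, η01 γ, ηPM γ, ηPM γ]
def ρvec : Fin 4 → M4 := ![ρ00, ρ01, ρPP, ρMM]

/-!
A separable `B` is positive semidefinite and has positive semidefinite partial transpose, so
`Tr((P + PT Q) B) = Tr(P B) + Tr(Q PT(B)) ≥ 0` whenever `P, Q ⪰ 0`. It remains to decompose each
`4(1+γ)(H - ηᵢρᵢ)`. For `ρ₊` and `ρ₋` it is already positive semidefinite once `γ ≥ 1/2`. For `ρ₀`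
(resp. `ρ₁`) the matrix has an entry `1` at `(00, 11)` (resp. `(01, 10)`) whose diagonal partner
`00` (resp. `01`) has been emptied; that entry is supplied by the partial transpose of
`2|ψ⟩⟨ψ|` with `ψ = |01⟩ + |10⟩/2` (resp. `|00⟩ + |11⟩/2`), and the rest is positive semidefinite
because `2γ - 4 ≥ 0`.
-/

lemma posSemidef_proj {n : Type*} [Fintype n] (v : n → ℂ) : (proj v).PosSemidef :=
  posSemidef_vecMulVec_self_star v

lemma posSemidef_smul_proj {n : Type*} [Fintype n] {r : ℝ} (hr : 0 ≤ r) (v : n → ℂ) :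
    ((r : ℂ) • proj v).PosSemidef :=
  (posSemidef_proj v).smul (Complex.zero_le_real.mpr hr)

lemma Matrix.PosSemidef.trace_mul_nonneg {n : Type*} [Fintype n] [DecidableEq n]
    {A B : Matrix n n ℂ} (hA : A.PosSemidef) (hB : B.PosSemidef) : 0 ≤ (A * B).trace := by
  open scoped MatrixOrder in
  obtain ⟨C, rfl⟩ := CStarAlgebra.nonneg_iff_eq_star_mul_self.mp hA.nonneg
  rw [star_eq_conjTranspose, Matrix.mul_assoc, trace_mul_comm]
  exact (hB.mul_mul_conjTranspose_same C).trace_nonneg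

lemma trace_PT_mul (A B : M4) : (PT A * B).trace = (A * PT B).trace := by
  simp only [trace, diag, mul_apply, PT, of_apply, Fintype.sum_prod_type, Fin.sum_univ_two]
  ring

lemma PT_kronecker (X Y : M2) : PT (X ⊗ₖ Y) = X ⊗ₖ Yᵀ := by
  ext ⟨i, j⟩ ⟨k, l⟩
  simp [PT]

lemma PT_sum {ι : Type*} (s : Finset ι) (f : ι → M4) :
    PT (∑ i ∈ s, f i) = ∑ i ∈ s, PT (f i) := by
  ext p q
  simp [PT, Matrix.sum_apply]

lemma PT_smul (c : ℂ) (A : M4) : PT (c • A) = c • PT A := rfl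

lemma Separable.posSemidef {B : M4} (hB : Separable B) : B.PosSemidef := by
  obtain ⟨k, X, Y, hXY, rfl⟩ := hB
  exact posSemidef_sum _ fun i _ => (hXY i).1.kronecker (hXY i).2

lemma Separable.posSemidef_PT {B : M4} (hB : Separable B) : (PT B).PosSemidef := by
  obtain ⟨k, X, Y, hXY, rfl⟩ := hB
  rw [PT_sum]
  exact posSemidef_sum _ fun i _ =>
    PT_kronecker (X i) (Y i) ▸ (hXY i).1.kronecker (hXY i).2.transpose

def IsDecomposable (E : M4) : Prop :=
  ∃ P Q : M4, P.PosSemidef ∧ Q.PosSemidef ∧ E = P + PT Q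

lemma Matrix.PosSemidef.isDecomposable {E : M4} (hE : E.PosSemidef) : IsDecomposable E :=
  ⟨E, 0, hE, .zero, by ext; simp [PT]⟩

lemma IsDecomposable.smul {E : M4} (hE : IsDecomposable E) {r : ℝ} (hr : 0 ≤ r) :
    IsDecomposable ((r : ℂ) • E) := by
  obtain ⟨P, Q, hP, hQ, rfl⟩ := hE
  have hr' : (0 : ℂ) ≤ r := Complex.zero_le_real.mpr hr
  exact ⟨(r : ℂ) • P, (r : ℂ) • Q, hP.smul hr', hQ.smul hr', by rw [smul_add, PT_smul]⟩

lemma IsDecomposable.trace_mul_nonneg {E B : M4} (hE : IsDecomposable E) (hB : Separable B) :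
    0 ≤ (E * B).trace := by
  obtain ⟨P, Q, hP, hQ, rfl⟩ := hE
  rw [Matrix.add_mul, trace_add, trace_PT_mul]
  exact add_nonneg (hP.trace_mul_nonneg hB.posSemidef) (hQ.trace_mul_nonneg hB.posSemidef_PT)

def vec4 (a b c d : ℂ) : Fin 2 × Fin 2 → ℂ := fun p => ![![a, b], ![c, d]] p.1 p.2

lemma ofReal_inv_sqrt_two_pow_four : (((Real.sqrt 2)⁻¹ : ℝ) : ℂ) ^ 4 = 4⁻¹ := by
  rw [← Complex.ofReal_pow, show 4 = 2 * 2 from rfl, pow_mul, inv_pow,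
    Real.sq_sqrt zero_le_two]
  norm_num

lemma ρPP_eq : ρPP = (4⁻¹ : ℂ) • proj (vec4 1 1 1 1) := by
  ext ⟨a, b⟩ ⟨c, d⟩
  fin_cases a <;> fin_cases b <;> fin_cases c <;> fin_cases d <;>
    simp [ρPP, proj, outer, ketP, vec4, Complex.conj_ofReal,
      ← ofReal_inv_sqrt_two_pow_four] <;> ring

lemma ρMM_eq : ρMM = (4⁻¹ : ℂ) • proj (vec4 1 (-1) (-1) 1) := by
  ext ⟨a, b⟩ ⟨c, d⟩
  fin_cases a <;> fin_cases b <;> fin_cases c <;> fin_cases d <;>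
    simp [ρMM, proj, outer, ketM, vec4, Complex.conj_ofReal,
      ← ofReal_inv_sqrt_two_pow_four] <;> ring

def scaledHop (γ : ℝ) : M4 :=
  (2 * (γ : ℂ)) • (proj ket0 ⊗ₖ σ0) + proj ket1 ⊗ₖ σ0 + σ1 ⊗ₖ σ1

lemma η01_eq (γ : ℝ) : η01 γ = 2 * γ / (4 * (1 + γ)) := by
  rw [η01, show (4 : ℝ) * (1 + γ) = 2 * (2 * (1 + γ)) by ring,
    mul_div_mul_left _ _ two_ne_zero]

lemma ηPM_eq (γ : ℝ) : ηPM γ = 2 / (4 * (1 + γ)) := by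
  rw [ηPM, show (4 : ℝ) * (1 + γ) = 2 * (2 * (1 + γ)) by ring,
    ← mul_div_mul_left (1 : ℝ) _ two_ne_zero, mul_one]

lemma isDecomposable_Hop_sub {γ η t : ℝ} (hγ : 0 ≤ 1 + γ) (hη : η = t / (4 * (1 + γ)))
    {ρ : M4} (h : IsDecomposable (scaledHop γ - (t : ℂ) • ρ)) :
    IsDecomposable (Hop γ - (η : ℂ) • ρ) := by
  have hsmul : Hop γ - (η : ℂ) • ρ =
      (((4 * (1 + γ))⁻¹ : ℝ) : ℂ) • (scaledHop γ - (t : ℂ) • ρ) := by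
    rw [hη, div_eq_inv_mul, smul_sub, Complex.ofReal_mul, mul_smul]
    rfl
  rw [hsmul]
  exact h.smul (inv_nonneg.mpr (by linarith))

lemma isDecomposable_scaledHop_sub_ρ00 {γ : ℝ} (hγ : 2 ≤ γ) :
    IsDecomposable (scaledHop γ - ((2 * γ : ℝ) : ℂ) • ρ00) := by
  refine ⟨((2 * γ - 4 : ℝ) : ℂ) • proj (vec4 0 1 0 0) + ((2 : ℝ) : ℂ) • proj (vec4 0 1 (1/2) 0)
      + proj (vec4 0 0 0 1), ((2 : ℝ) : ℂ) • proj (vec4 0 1 (1/2) 0), ?_, ?_, ?_⟩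
  · exact ((posSemidef_smul_proj (by linarith) _).add (posSemidef_smul_proj zero_le_two _)).add
      (posSemidef_proj _)
  · exact posSemidef_smul_proj zero_le_two _
  · ext ⟨a, b⟩ ⟨c, d⟩
    fin_cases a <;> fin_cases b <;> fin_cases c <;> fin_cases d <;>
      simp [scaledHop, ρ00, proj, outer, ket0, ket1, σ0, σ1, PT, vec4, one_apply,
        map_ofNat] <;> ring

lemma isDecomposable_scaledHop_sub_ρ01 {γ : ℝ} (hγ : 2 ≤ γ) :
    IsDecomposable (scaledHop γ - ((2 * γ : ℝ) : ℂ) • ρ01) := by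
  refine ⟨((2 * γ - 4 : ℝ) : ℂ) • proj (vec4 1 0 0 0) + ((2 : ℝ) : ℂ) • proj (vec4 1 0 0 (1/2))
      + proj (vec4 0 0 1 0), ((2 : ℝ) : ℂ) • proj (vec4 1 0 0 (1/2)), ?_, ?_, ?_⟩
  · exact ((posSemidef_smul_proj (by linarith) _).add (posSemidef_smul_proj zero_le_two _)).add
      (posSemidef_proj _)
  · exact posSemidef_smul_proj zero_le_two _
  · ext ⟨a, b⟩ ⟨c, d⟩
    fin_cases a <;> fin_cases b <;> fin_cases c <;> fin_cases d <;>
      simp [scaledHop, ρ01, proj, outer, ket0, ket1, σ0, σ1, PT, vec4, one_apply,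
        map_ofNat] <;> ring

lemma posSemidef_scaledHop_sub_ρPP {γ : ℝ} (hγ : 1 / 2 ≤ γ) :
    (scaledHop γ - ((2 : ℝ) : ℂ) • ρPP).PosSemidef := by
  have hdecomp : scaledHop γ - ((2 : ℝ) : ℂ) • ρPP =
      ((2 * γ - 1 : ℝ) : ℂ) • proj (vec4 1 0 0 0) + ((2 * γ - 1 : ℝ) : ℂ) • proj (vec4 0 1 0 0)
        + ((2⁻¹ : ℝ) : ℂ) • proj (vec4 (-1) 1 1 (-1)) := by
    ext ⟨a, b⟩ ⟨c, d⟩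
    fin_cases a <;> fin_cases b <;> fin_cases c <;> fin_cases d <;>
      simp [scaledHop, ρPP_eq, proj, outer, ket0, ket1, σ0, σ1, vec4, one_apply] <;> ring
  have hc : 0 ≤ 2 * γ - 1 := by linarith
  rw [hdecomp]
  exact ((posSemidef_smul_proj hc _).add (posSemidef_smul_proj hc _)).add
    (posSemidef_smul_proj (by norm_num) _)

lemma posSemidef_scaledHop_sub_ρMM {γ : ℝ} (hγ : 1 / 2 ≤ γ) :
    (scaledHop γ - ((2 : ℝ) : ℂ) • ρMM).PosSemidef := by
  have hdecomp : scaledHop γ - ((2 : ℝ) : ℂ) • ρMM =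
      ((2 * γ - 1 : ℝ) : ℂ) • proj (vec4 1 0 0 0) + ((2 * γ - 1 : ℝ) : ℂ) • proj (vec4 0 1 0 0)
        + ((2⁻¹ : ℝ) : ℂ) • proj (vec4 1 1 1 1) := by
    ext ⟨a, b⟩ ⟨c, d⟩
    fin_cases a <;> fin_cases b <;> fin_cases c <;> fin_cases d <;>
      simp [scaledHop, ρMM_eq, proj, outer, ket0, ket1, σ0, σ1, vec4, one_apply] <;> ring
  have hc : 0 ≤ 2 * γ - 1 := by linarith
  rw [hdecomp]
  exact ((posSemidef_smul_proj hc _).add (posSemidef_smul_proj hc _)).add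
    (posSemidef_smul_proj (by norm_num) _)

/-- each H − ηᵢρᵢ is a sum of a PSD operator and the partial transpose of
a PSD operator; consequently Tr((H−ηᵢρᵢ)B) ≥ 0 for every separable PSD B. -/
theorem stmt_5 (γ : ℝ) (hγ : 2 ≤ γ) :
    ∀ i : Fin 4,
      (∃ P Q : M4, P.PosSemidef ∧ Q.PosSemidef ∧
          Hop γ - (ηvec γ i : ℂ) • ρvec i = P + PT Q)
      ∧ ∀ B : M4, Separable B →
          0 ≤ ((Hop γ - (ηvec γ i : ℂ) • ρvec i) * B).trace := by
  have hγ₀ : 0 ≤ 1 + γ := by linarith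
  have hγ₁ : 1 / 2 ≤ γ := by linarith
  have hdecomp : ∀ i, IsDecomposable (Hop γ - (ηvec γ i : ℂ) • ρvec i) := by
    intro i
    fin_cases i
    · exact isDecomposable_Hop_sub hγ₀ (η01_eq γ) (isDecomposable_scaledHop_sub_ρ00 hγ)
    · exact isDecomposable_Hop_sub hγ₀ (η01_eq γ) (isDecomposable_scaledHop_sub_ρ01 hγ)
    · exact isDecomposable_Hop_sub hγ₀ (ηPM_eq γ)
        (posSemidef_scaledHop_sub_ρPP hγ₁).isDecomposable
    · exact isDecomposable_Hop_sub hγ₀ (ηPM_eq γ)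
        (posSemidef_scaledHop_sub_ρMM hγ₁).isDecomposable
  exact fun i => ⟨hdecomp i, fun B hB => (hdecomp i).trace_mul_nonneg hB⟩
end
end

section
/- For γ ≥ 2, the Hermitian operator ρ̃₍₀,₊₎ − ρ̃₍₁,₋₎ on ℂ²⊗ℂ², where ρ̃₍₀,₊₎ = (γ/(1+γ))|00⟩⟨00| + (1/(1+γ))|+⟩⟨+|⊗|+⟩⟨+| and ρ̃₍₁,₋₎ = (γ/(1+γ))|01⟩⟨01| + (1/(1+γ))|+⟩⟨+|⊗|−⟩⟨−|, has exactly the four eigenvalues λ₊, λ₋, −λ₊, −λ₋ with λ± = (√(1+γ+γ²) ± √(1−γ+γ²))/(2(1+γ)). -/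
open Matrix ComplexOrder
open scoped Kronecker

noncomputable section

/-- Example 2 states (ρ₀, ρ₁, ρ₊ as in Example 1; ρ₋ = |+⟩⟨+|⊗|−⟩⟨−|) -/
def ρ00' : M4 := proj ket0 ⊗ₖ proj ket0
def ρ01' : M4 := proj ket0 ⊗ₖ proj ket1
def ρPP' : M4 := proj ketP ⊗ₖ proj ketP
def ρPM' : M4 := proj ketP ⊗ₖ proj ketM

/-- average states ρ̃₍b,±₎ = (γ/(1+γ))|0⟩⟨0|⊗|b⟩⟨b| + (1/(1+γ))|+⟩⟨+|⊗|±⟩⟨±| -/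
def rt0p (γ : ℝ) : M4 :=
  ((γ / (1 + γ) : ℝ) : ℂ) • (proj ket0 ⊗ₖ proj ket0)
    + ((1 / (1 + γ) : ℝ) : ℂ) • (proj ketP ⊗ₖ proj ketP)
def rt0m (γ : ℝ) : M4 :=
  ((γ / (1 + γ) : ℝ) : ℂ) • (proj ket0 ⊗ₖ proj ket0)
    + ((1 / (1 + γ) : ℝ) : ℂ) • (proj ketP ⊗ₖ proj ketM)
def rt1p (γ : ℝ) : M4 :=
  ((γ / (1 + γ) : ℝ) : ℂ) • (proj ket0 ⊗ₖ proj ket1)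
    + ((1 / (1 + γ) : ℝ) : ℂ) • (proj ketP ⊗ₖ proj ketP)
def rt1m (γ : ℝ) : M4 :=
  ((γ / (1 + γ) : ℝ) : ℂ) • (proj ket0 ⊗ₖ proj ket1)
    + ((1 / (1 + γ) : ℝ) : ℂ) • (proj ketP ⊗ₖ proj ketM)

/-!
In the basis |00⟩, |01⟩, |10⟩, |11⟩ the operator ρ̃₍₀,₊₎ − ρ̃₍₁,₋₎ is the real symmetric matrix
`rtDiffMatrix a c` with a = γ/(1+γ), c = 1/(2(1+γ)), whose characteristic polynomial is the even
polynomial X⁴ − (a² + 4c²)X² + a²c². It factors as (X² − λ₊²)(X² − λ₋²) because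
λ₊² + λ₋² = a² + 4c² and λ₊λ₋ = ac, and the eigenvalues of a Hermitian matrix are the roots of its
characteristic polynomial.
-/

open Polynomial

theorem Matrix.IsHermitian.kronecker {R l n : Type*} [CommRing R] [StarRing R]
    {A : Matrix l l R} {B : Matrix n n R} (hA : A.IsHermitian) (hB : B.IsHermitian) :
    (A ⊗ₖ B).IsHermitian := by
  rw [IsHermitian, conjTranspose_kronecker, hA.eq, hB.eq]

theorem Matrix.IsHermitian.eigenvalues_eq_of_charpoly_eq {𝕜 n : Type*} [RCLike 𝕜] [Fintype n]
    [DecidableEq n] {A : Matrix n n 𝕜} (hA : A.IsHermitian) {m : Multiset ℝ}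
    (h : A.charpoly = ((m.map RCLike.ofReal).map fun z => X - C z).prod) :
    Finset.univ.val.map hA.eigenvalues = m := by
  apply Multiset.map_injective (RCLike.ofReal_injective (K := 𝕜))
  rw [Multiset.map_map, ← hA.roots_charpoly_eq_eigenvalues, h, roots_multiset_prod_X_sub_C]

theorem prod_X_sub_C_pm {R : Type*} [CommRing R] (p q : R) :
    (({p, q, -p, -q} : Multiset R).map fun z => X - C z).prod
      = X ^ 4 - C (p ^ 2 + q ^ 2) * X ^ 2 + C (p ^ 2 * q ^ 2) := by
  simp only [Multiset.insert_eq_cons, Multiset.map_cons, Multiset.map_singleton,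
    Multiset.prod_cons, Multiset.prod_singleton, C_add, C_mul, C_pow, C_neg]
  ring

theorem isHermitian_proj {n : Type*} (v : n → ℂ) : (proj v).IsHermitian := by
  ext i j
  simp [proj, outer, mul_comm]

theorem isHermitian_ofReal_smul_proj_kronecker_add {l n : Type*} (a b : ℝ) (u w : l → ℂ)
    (v x : n → ℂ) :
    ((a : ℂ) • (proj u ⊗ₖ proj v) + (b : ℂ) • (proj w ⊗ₖ proj x)).IsHermitian :=
  (((isHermitian_proj u).kronecker (isHermitian_proj v)).smul (Complex.conj_ofReal a)).add
    (((isHermitian_proj w).kronecker (isHermitian_proj x)).smul (Complex.conj_ofReal b))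

theorem proj_ket0 : proj ket0 = !![1, 0; 0, 0] := by
  ext i j
  fin_cases i <;> fin_cases j <;> simp [proj, outer, ket0]

theorem proj_ket1 : proj ket1 = !![0, 0; 0, 1] := by
  ext i j
  fin_cases i <;> fin_cases j <;> simp [proj, outer, ket1]

theorem inv_sqrt_two_mul_self : ((√2 : ℝ) : ℂ)⁻¹ * ((√2 : ℝ) : ℂ)⁻¹ = 2⁻¹ := by
  rw [← mul_inv, ← Complex.ofReal_mul, Real.mul_self_sqrt zero_le_two]
  norm_num

theorem proj_ketP : proj ketP = !![1 / 2, 1 / 2; 1 / 2, 1 / 2] := by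
  ext i j
  fin_cases i <;> fin_cases j <;> simp [proj, outer, ketP, inv_sqrt_two_mul_self]

theorem proj_ketM : proj ketM = !![1 / 2, -(1 / 2); -(1 / 2), 1 / 2] := by
  ext i j
  fin_cases i <;> fin_cases j <;> simp [proj, outer, ketM, inv_sqrt_two_mul_self]

def rtDiffMatrix {R : Type*} [Ring R] (a c : R) : Matrix (Fin 4) (Fin 4) R :=
  !![a, c, 0, c; c, -a, c, 0; 0, c, 0, c; c, 0, c, 0]

theorem charpoly_rtDiffMatrix {R : Type*} [CommRing R] (a c : R) :
    (rtDiffMatrix a c).charpoly = X ^ 4 - C (a ^ 2 + 4 * c ^ 2) * X ^ 2 + C (a ^ 2 * c ^ 2) := by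
  rw [charpoly, det_succ_row_zero]
  simp [rtDiffMatrix, charmatrix_apply, Fin.sum_univ_succ, det_succ_row_zero, Fin.succAbove,
    map_ofNat]
  ring

theorem charpoly_rtDiffMatrix_eq_prod {a c p q : ℝ} (hsum : p ^ 2 + q ^ 2 = a ^ 2 + 4 * c ^ 2)
    (hprod : p ^ 2 * q ^ 2 = a ^ 2 * c ^ 2) :
    (rtDiffMatrix (a : ℂ) c).charpoly
      = ((({p, q, -p, -q} : Multiset ℝ).map ((↑) : ℝ → ℂ)).map fun z => X - C z).prod := by
  have hmap : ({p, q, -p, -q} : Multiset ℝ).map ((↑) : ℝ → ℂ)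
      = {(p : ℂ), (q : ℂ), -(p : ℂ), -(q : ℂ)} := by
    simp
  rw [hmap, prod_X_sub_C_pm, charpoly_rtDiffMatrix]
  norm_cast
  rw [hsum, hprod]

theorem reindex_rt0p_sub_rt1m (γ : ℝ) :
    reindex finProdFinEquiv finProdFinEquiv (rt0p γ - rt1m γ)
      = rtDiffMatrix ((γ / (1 + γ) : ℝ) : ℂ) ((1 / (2 * (1 + γ)) : ℝ) : ℂ) := by
  ext i j
  fin_cases i <;> fin_cases j <;>
    simp [rt0p, rt1m, rtDiffMatrix, proj_ket0, proj_ket1, proj_ketP, proj_ketM,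
      finProdFinEquiv, Fin.divNat, Fin.modNat] <;>
    ring

theorem sq_add_sq_and_sq_mul_sq_eigenvalues (γ : ℝ) :
    ((√(1 + γ + γ ^ 2) + √(1 - γ + γ ^ 2)) / (2 * (1 + γ))) ^ 2
        + ((√(1 + γ + γ ^ 2) - √(1 - γ + γ ^ 2)) / (2 * (1 + γ))) ^ 2
        = (γ / (1 + γ)) ^ 2 + 4 * (1 / (2 * (1 + γ))) ^ 2 ∧
      ((√(1 + γ + γ ^ 2) + √(1 - γ + γ ^ 2)) / (2 * (1 + γ))) ^ 2
        * ((√(1 + γ + γ ^ 2) - √(1 - γ + γ ^ 2)) / (2 * (1 + γ))) ^ 2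
        = (γ / (1 + γ)) ^ 2 * (1 / (2 * (1 + γ))) ^ 2 := by
  set s := √(1 + γ + γ ^ 2)
  set t := √(1 - γ + γ ^ 2)
  have hs : s ^ 2 = 1 + γ + γ ^ 2 := Real.sq_sqrt (by nlinarith [sq_nonneg (γ + 1 / 2)])
  have ht : t ^ 2 = 1 - γ + γ ^ 2 := Real.sq_sqrt (by nlinarith [sq_nonneg (γ - 1 / 2)])
  -- Everything is a multiple of c, so the identities are polynomial and also hold at γ = -1.
  set c := (2 * (1 + γ))⁻¹
  have ha : γ / (1 + γ) = 2 * γ * c := by simp only [c, mul_inv]; ring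
  simp only [div_eq_mul_inv (s + _), div_eq_mul_inv (s - _), ha, one_div]
  constructor
  · linear_combination (2 * c ^ 2) * hs + (2 * c ^ 2) * ht
  · linear_combination (c ^ 4 * (s ^ 2 - t ^ 2 + 2 * γ)) * (hs - ht)

theorem stmt_11_general (γ : ℝ) :
    ∃ h : (rt0p γ - rt1m γ).IsHermitian,
      Multiset.map h.eigenvalues Finset.univ.val =
        {(Real.sqrt (1 + γ + γ^2) + Real.sqrt (1 - γ + γ^2)) / (2 * (1 + γ)),
         (Real.sqrt (1 + γ + γ^2) - Real.sqrt (1 - γ + γ^2)) / (2 * (1 + γ)),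
         -((Real.sqrt (1 + γ + γ^2) + Real.sqrt (1 - γ + γ^2)) / (2 * (1 + γ))),
         -((Real.sqrt (1 + γ + γ^2) - Real.sqrt (1 - γ + γ^2)) / (2 * (1 + γ)))} := by
  have hH : (rt0p γ - rt1m γ).IsHermitian :=
    (isHermitian_ofReal_smul_proj_kronecker_add _ _ _ _ _ _).sub
      (isHermitian_ofReal_smul_proj_kronecker_add _ _ _ _ _ _)
  refine ⟨hH, hH.eigenvalues_eq_of_charpoly_eq ?_⟩
  obtain ⟨hsum, hprod⟩ := sq_add_sq_and_sq_mul_sq_eigenvalues γ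
  rw [← charpoly_reindex finProdFinEquiv, reindex_rt0p_sub_rt1m]
  exact charpoly_rtDiffMatrix_eq_prod hsum hprod

/-- the eigenvalues of ρ̃₍₀,₊₎ − ρ̃₍₁,₋₎ are exactly λ₊, λ₋, −λ₊, −λ₋,
each with multiplicity one, where λ± = (√(1+γ+γ²) ± √(1−γ+γ²))/(2(1+γ)). -/
theorem stmt_11 (γ : ℝ) (hγ : 2 ≤ γ) :
    ∃ h : (rt0p γ - rt1m γ).IsHermitian,
      Multiset.map h.eigenvalues Finset.univ.val =
        {(Real.sqrt (1 + γ + γ^2) + Real.sqrt (1 - γ + γ^2)) / (2 * (1 + γ)),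
         (Real.sqrt (1 + γ + γ^2) - Real.sqrt (1 - γ + γ^2)) / (2 * (1 + γ)),
         -((Real.sqrt (1 + γ + γ^2) + Real.sqrt (1 - γ + γ^2)) / (2 * (1 + γ))),
         -((Real.sqrt (1 + γ + γ^2) - Real.sqrt (1 - γ + γ^2)) / (2 * (1 + γ)))} :=
  stmt_11_general γ
end
end

section
/- Let A be a Hermitian operator on ℂ²⊗ℂ² with A + (σ₀⊗σ₂)A(σ₀⊗σ₂) = I. If Π is the orthogonal projection onto the nonnegative eigenspace structure arising as in the paper (specifically, if Π is a projection with Π + (σ₀⊗σ₂)Π(σ₀⊗σ₂) = I), then PT(Π) = Π; in particular Π is a PPT operator and hence separable. -/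
open Matrix ComplexOrder
open scoped Kronecker

noncomputable section

/-!
Write `P` in `2 × 2` blocks `P_αβ` with respect to the second tensor factor. Conjugation by
`σ₀ ⊗ σ₂` maps the blocks `(P₀₀, P₀₁, P₁₀, P₁₁)` to `(P₁₁, -P₁₀, -P₀₁, P₀₀)`, so the hypothesis
says `P₁₀ = P₀₁ =: A` and `P₁₁ = 1 - P₀₀`, with `D := P₀₀`. Partial transposition exchanges `P₀₁`
and `P₁₀`, hence fixes `P`. As `P` is a Hermitian projection, `A` and `D` are commuting Hermitian
matrices with `D² + A² = D`. In a common orthonormal eigenbasis `(v_k)`, with eigenvalues `d_k` of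
`D` and `a_k` of `A`, this gives `P = ∑ₖ |v_k⟩⟨v_k| ⊗ [[d_k, a_k], [a_k, 1 - d_k]]`, and every
second factor is a Hermitian projection since `d_k² + a_k² = d_k`. So `P` is separable directly,
without the Horodecki criterion.
-/

theorem LinearMap.IsSymmetric.exists_orthonormalBasis_common_eigenvectors {𝕜 E : Type*}
    [RCLike 𝕜] [NormedAddCommGroup E] [InnerProductSpace 𝕜 E] [FiniteDimensional 𝕜 E]
    {S T : E →ₗ[𝕜] E} (hS : S.IsSymmetric) (hT : T.IsSymmetric) (hST : Commute S T) :
    ∃ (m : ℕ) (b : OrthonormalBasis (Fin m) 𝕜 E) (s t : Fin m → ℝ),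
      ∀ k, S (b k) = (s k : 𝕜) • b k ∧ T (b k) = (t k : 𝕜) • b k := by
  classical
  let V : 𝕜 × 𝕜 → Submodule 𝕜 E := fun μ =>
    Module.End.eigenspace S μ.2 ⊓ Module.End.eigenspace T μ.1
  have hV : DirectSum.IsInternal V := hS.directSum_isInternal_of_commute hT hST
  have hV' : OrthogonalFamily 𝕜 (fun μ => V μ) fun μ => (V μ).subtypeₗᵢ :=
    hS.orthogonalFamily_eigenspace_inf_eigenspace hT
  let β := hV.collectedBasis fun μ => (stdOrthonormalBasis 𝕜 (V μ)).toBasis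
  have : Finite (Σ μ, Fin (Module.finrank 𝕜 (V μ))) := Module.Finite.finite_basis β
  let _ : Fintype (Σ μ, Fin (Module.finrank 𝕜 (V μ))) := .ofFinite _
  let e := Fintype.equivFin (Σ μ, Fin (Module.finrank 𝕜 (V μ)))
  let b := (β.toOrthonormalBasis (by
    simpa [β] using hV'.orthonormal_sigma_orthonormal
      fun μ => (stdOrthonormalBasis 𝕜 (V μ)).orthonormal)).reindex e
  have hb k : b k ∈ V (e.symm k).1 := by
    simp only [b, OrthonormalBasis.reindex_apply, Module.Basis.coe_toOrthonormalBasis]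
    exact hV.collectedBasis_mem _ _
  have apply_eq_re_smul {R : E →ₗ[𝕜] E} (hR : R.IsSymmetric) {μ : 𝕜} {v : E}
      (hv : v ∈ Module.End.eigenspace R μ) (hv0 : v ≠ 0) : R v = (RCLike.re μ : 𝕜) • v := by
    rw [RCLike.conj_eq_iff_re.mp
      (hR.conj_eigenvalue_eq_self (Module.End.hasEigenvalue_of_hasEigenvector ⟨hv, hv0⟩))]
    exact Module.End.mem_eigenspace_iff.mp hv
  exact ⟨_, b, fun k => RCLike.re (e.symm k).1.2, fun k => RCLike.re (e.symm k).1.1, fun k =>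
    ⟨apply_eq_re_smul hS (hb k).1 (b.orthonormal.ne_zero k),
      apply_eq_re_smul hT (hb k).2 (b.orthonormal.ne_zero k)⟩⟩

namespace Matrix

section Spectral

variable {𝕜 n : Type*} [RCLike 𝕜] [Fintype n] [DecidableEq n]

theorem IsHermitian.exists_orthonormalBasis_common_eigenvectors {A B : Matrix n n 𝕜}
    (hA : A.IsHermitian) (hB : B.IsHermitian) (hAB : Commute A B) :
    ∃ (m : ℕ) (b : OrthonormalBasis (Fin m) 𝕜 (EuclideanSpace 𝕜 n)) (a c : Fin m → ℝ),
      ∀ k, A *ᵥ b k = (a k : 𝕜) • ⇑(b k) ∧ B *ᵥ b k = (c k : 𝕜) • ⇑(b k) := by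
  obtain ⟨m, b, a, c, hb⟩ :=
    (isSymmetric_toEuclideanLin_iff.mpr hA).exists_orthonormalBasis_common_eigenvectors
      (isSymmetric_toEuclideanLin_iff.mpr hB) (hAB.map (toLpLinAlgEquiv 2))
  exact ⟨m, b, a, c, fun k => ⟨congrArg WithLp.ofLp (hb k).1, congrArg WithLp.ofLp (hb k).2⟩⟩

theorem _root_.OrthonormalBasis.sum_vecMulVec_eq_one {ι : Type*} [Fintype ι]
    (b : OrthonormalBasis ι 𝕜 (EuclideanSpace 𝕜 n)) :
    ∑ k, vecMulVec ⇑(b k) (star ⇑(b k)) = 1 := by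
  have := congrArg (fun T => toEuclideanLin.symm T.toLinearMap) b.sum_rankOne_eq_id
  simpa [InnerProductSpace.symm_toEuclideanLin_rankOne] using this

theorem eq_sum_smul_vecMulVec_of_mulVec_eq {ι : Type*} [Fintype ι]
    (b : OrthonormalBasis ι 𝕜 (EuclideanSpace 𝕜 n)) {A : Matrix n n 𝕜} {μ : ι → 𝕜}
    (h : ∀ k, A *ᵥ b k = μ k • ⇑(b k)) :
    A = ∑ k, μ k • vecMulVec ⇑(b k) (star ⇑(b k)) := by
  conv_lhs => rw [← A.mul_one, ← b.sum_vecMulVec_eq_one]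
  simp [Finset.mul_sum, mul_vecMulVec, h, smul_vecMulVec]

omit [DecidableEq n] in
theorem sq_add_sq_eq_of_mul_self_add_mul_self_eq {D A : Matrix n n 𝕜} (h : D * D + A * A = D)
    {v : n → 𝕜} (hv : v ≠ 0) {d a : ℝ} (hDv : D *ᵥ v = (d : 𝕜) • v)
    (hAv : A *ᵥ v = (a : 𝕜) • v) : d ^ 2 + a ^ 2 = d := by
  have hhv := congrArg (· *ᵥ v) h
  simp only [add_mulVec, ← mulVec_mulVec, hDv, hAv, mulVec_smul, smul_smul, ← add_smul] at hhv
  have := smul_left_injective 𝕜 hv hhv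
  exact_mod_cast (by linear_combination this : (d : 𝕜) ^ 2 + (a : 𝕜) ^ 2 = d)

end Spectral

variable {m o R : Type*}

def sndBlock (P : Matrix (m × o) (m × o) R) (α β : o) : Matrix m m R :=
  of fun i j => P (i, α) (j, β)

@[simp]
theorem sndBlock_apply (P : Matrix (m × o) (m × o) R) (α β : o) (i j : m) :
    sndBlock P α β i j = P (i, α) (j, β) := rfl

theorem ext_sndBlock {P Q : Matrix (m × o) (m × o) R}
    (h : ∀ α β, sndBlock P α β = sndBlock Q α β) : P = Q := by
  ext ⟨i, α⟩ ⟨j, β⟩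
  exact congrFun₂ (h α β) i j

theorem sndBlock_mul [Fintype m] [Fintype o] [NonUnitalNonAssocSemiring R]
    (P Q : Matrix (m × o) (m × o) R) (α β : o) :
    sndBlock (P * Q) α β = ∑ γ, sndBlock P α γ * sndBlock Q γ β := by
  ext i j
  simp only [sndBlock_apply, mul_apply, Fintype.sum_prod_type, sum_apply]
  exact Finset.sum_comm

theorem sndBlock_conjTranspose [Star R] (P : Matrix (m × o) (m × o) R) (α β : o) :
    sndBlock Pᴴ α β = (sndBlock P β α)ᴴ := rfl

theorem sndBlock_sum_kronecker {ι : Type*} [Fintype ι] [CommSemiring R]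
    (X : ι → Matrix m m R) (Y : ι → Matrix o o R) (α β : o) :
    sndBlock (∑ k, X k ⊗ₖ Y k) α β = ∑ k, Y k α β • X k := by
  ext i j
  simp [sum_apply, mul_comm]

end Matrix

section SigmaTwoSymmetric

variable {P : M4} (h : P + (σ0 ⊗ₖ σ2) * P * (σ0 ⊗ₖ σ2) = 1)
include h

theorem sndBlock_one_zero_of_add_conj_eq_one : sndBlock P 1 0 = sndBlock P 0 1 := by
  ext i j
  have hij := congrFun₂ h (i, 0) (j, 1)
  simp [mul_apply, Fintype.sum_prod_type, σ0, σ2, one_apply] at hij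
  simp only [sndBlock_apply]
  linear_combination -hij + P (i, 1) (j, 0) * Complex.I_sq

theorem sndBlock_one_one_of_add_conj_eq_one : sndBlock P 1 1 = 1 - sndBlock P 0 0 := by
  ext i j
  have hij := congrFun₂ h (i, 0) (j, 0)
  simp [mul_apply, Fintype.sum_prod_type, σ0, σ2, one_apply] at hij
  simp only [sndBlock_apply, Matrix.sub_apply, one_apply]
  linear_combination hij + P (i, 1) (j, 1) * Complex.I_sq

end SigmaTwoSymmetric

open scoped MatrixOrder in
theorem posSemidef_fin_two_of_sq_add_sq_eq_self {d a : ℝ} (h : d ^ 2 + a ^ 2 = d) :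
    (!![(d : ℂ), a; a, 1 - d]).PosSemidef := by
  refine nonneg_iff_posSemidef.mp (IsStarProjection.nonneg ⟨?_, ?_⟩)
  · have hC : (d : ℂ) ^ 2 + (a : ℂ) ^ 2 = d := by exact_mod_cast h
    ext i j
    fin_cases i <;> fin_cases j <;> simp [mul_apply, Fin.sum_univ_two] <;>
      first | ring1 | linear_combination hC
  · ext i j
    fin_cases i <;> fin_cases j <;> simp [Complex.conj_ofReal]

theorem separable_of_sndBlock {P : M4} (hP : P.IsHermitian) (hidem : P * P = P)
    (h10 : sndBlock P 1 0 = sndBlock P 0 1) (h11 : sndBlock P 1 1 = 1 - sndBlock P 0 0) :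
    Separable P := by
  set D := sndBlock P 0 0
  set A := sndBlock P 0 1
  have hD : D.IsHermitian :=
    (sndBlock_conjTranspose P 0 0).symm.trans (congrArg (sndBlock · 0 0) hP)
  have hA : A.IsHermitian :=
    (sndBlock_conjTranspose P 1 0).symm.trans ((congrArg (sndBlock · 1 0) hP).trans h10)
  have hsq : D * D + A * A = D := by
    simpa [sndBlock_mul, Fin.sum_univ_two, h10] using congrArg (sndBlock · 0 0) hidem
  have hAD : Commute A D := by
    have := congrArg (sndBlock · 0 1) hidem
    simp only [sndBlock_mul, Fin.sum_univ_two, h11, mul_sub, mul_one] at this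
    rw [add_sub_assoc', add_sub_right_comm, add_eq_right, sub_eq_zero] at this
    exact this.symm
  obtain ⟨m, b, a, d, hb⟩ := hA.exists_orthonormalBasis_common_eigenvectors hD hAD
  have hda k : d k ^ 2 + a k ^ 2 = d k :=
    sq_add_sq_eq_of_mul_self_add_mul_self_eq hsq (by simpa using b.orthonormal.ne_zero k)
      (hb k).2 (hb k).1
  refine ⟨m, fun k => vecMulVec (b k) (star (b k)), fun k => !![(d k : ℂ), a k; a k, 1 - d k],
    fun k => ⟨posSemidef_vecMulVec_self_star _, posSemidef_fin_two_of_sq_add_sq_eq_self (hda k)⟩,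
    ext_sndBlock ?_⟩
  have hD' := eq_sum_smul_vecMulVec_of_mulVec_eq b (fun k => (hb k).2)
  have hA' := eq_sum_smul_vecMulVec_of_mulVec_eq b (fun k => (hb k).1)
  have h1 := b.sum_vecMulVec_eq_one
  intro α β
  fin_cases α <;> fin_cases β <;>
    simp only [sndBlock_sum_kronecker, Fin.zero_eta, Fin.mk_one, of_apply, cons_val',
      cons_val_zero, cons_val_one, empty_val', cons_val_fin_one, h10, h11]
  · exact hD'
  · exact hA'
  · exact hA'
  · rw [hD', ← h1, ← Finset.sum_sub_distrib]
    simp [sub_smul]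

theorem sndBlock_PT (P : M4) (α β : Fin 2) : sndBlock (PT P) α β = sndBlock P β α := rfl

theorem PT_eq_self_of_sndBlock {P : M4} (h10 : sndBlock P 1 0 = sndBlock P 0 1) : PT P = P :=
  ext_sndBlock fun α β => by fin_cases α <;> fin_cases β <;> simp [sndBlock_PT, h10]

/-- a projection P with P + (σ₀⊗σ₂)P(σ₀⊗σ₂) = 1 satisfies PT(P) = P,
hence P is PPT and separable. -/
theorem stmt_14 (P : M4) (hP : P.IsHermitian) (hidem : P * P = P)
    (h : P + (σ0 ⊗ₖ σ2) * P * (σ0 ⊗ₖ σ2) = 1) :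
    PT P = P ∧ Separable P := by
  have h10 := sndBlock_one_zero_of_add_conj_eq_one h
  exact ⟨PT_eq_self_of_sndBlock h10,
    separable_of_sndBlock hP hidem h10 (sndBlock_one_one_of_add_conj_eq_one h)⟩
end
end
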